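/- Fix channel gains h₁ ≥ h₂ > 0, a peak total power P̃ > 0 and rates r₁, r₂ ≥ 0. There exist powers P₁, P₂ ≥ 0 with P₁ + P₂ ≤ P̃ such that (r₁, r₂) is decodable in the broadcast channel if and only if (2^{r₁} − 1)/h₁^2 ≤ P̃ and (2^{r₁} − 1)·2^{r₂}/h₁^2 + (2^{r₂} − 1)/h₂^2 ≤ P̃. -/

import Mathlib

open Real

/-- Rate pair `(r₁, r₂)` is decodable in the two-user Gaussian broadcast channel with
gains `h₁ ≥ h₂`, codeword powers `P₁, P₂` and unit-variance noise at both receivers: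
the weaker user 2 decodes treating user 1's codeword as noise, and the stronger user 1
decodes and cancels user 2's codeword before decoding its own. -/
def bcDec (h₁ h₂ P₁ P₂ r₁ r₂ : ℝ) : Prop :=
  Real.logb 2 (1 + h₂ ^ 2 * P₂ / (1 + h₂ ^ 2 * P₁)) ≥ r₂ ∧
    Real.logb 2 (1 + h₁ ^ 2 * P₁) ≥ r₁

theorem bc_peak_power_supported_rates
    (h₁ h₂ Pp r₁ r₂ : ℝ) (hh₂ : 0 < h₂) (hh : h₂ ≤ h₁) (hPp : 0 < Pp)
    (hr₁ : 0 ≤ r₁) (hr₂ : 0 ≤ r₂) :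
    (∃ P₁ P₂ : ℝ, 0 ≤ P₁ ∧ 0 ≤ P₂ ∧ P₁ + P₂ ≤ Pp ∧ bcDec h₁ h₂ P₁ P₂ r₁ r₂) ↔
      (((2 : ℝ) ^ r₁ - 1) / h₁ ^ 2 ≤ Pp ∧
        ((2 : ℝ) ^ r₁ - 1) * (2 : ℝ) ^ r₂ / h₁ ^ 2 + ((2 : ℝ) ^ r₂ - 1) / h₂ ^ 2 ≤ Pp) := by
  have hh₁ : (0:ℝ) < h₁ := lt_of_lt_of_le hh₂ hh
  have h2sq : (0:ℝ) < h₂ ^ 2 := by positivity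
  have h1sq : (0:ℝ) < h₁ ^ 2 := by positivity
  have he₁ : (1:ℝ) ≤ (2:ℝ) ^ r₁ := Real.one_le_rpow one_le_two hr₁
  have he₂ : (1:ℝ) ≤ (2:ℝ) ^ r₂ := Real.one_le_rpow one_le_two hr₂
  constructor
  · rintro ⟨P₁, P₂, hP₁, hP₂, hsum, hd₂, hd₁⟩
    have hx1 : (0:ℝ) < 1 + h₁ ^ 2 * P₁ := by nlinarith
    have hden : (0:ℝ) < 1 + h₂ ^ 2 * P₁ := by nlinarith
    have h1 : (2:ℝ) ^ r₁ ≤ 1 + h₁ ^ 2 * P₁ :=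
      (Real.le_logb_iff_rpow_le one_lt_two hx1).mp hd₁
    have hx2 : (0:ℝ) < 1 + h₂ ^ 2 * P₂ / (1 + h₂ ^ 2 * P₁) := by positivity
    have h2 : (2:ℝ) ^ r₂ ≤ 1 + h₂ ^ 2 * P₂ / (1 + h₂ ^ 2 * P₁) :=
      (Real.le_logb_iff_rpow_le one_lt_two hx2).mp hd₂
    have h2' : ((2:ℝ) ^ r₂ - 1) * (1 + h₂ ^ 2 * P₁) ≤ h₂ ^ 2 * P₂ := by
      have := sub_le_sub_right h2 1
      rw [add_sub_cancel_left] at this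
      calc ((2:ℝ) ^ r₂ - 1) * (1 + h₂ ^ 2 * P₁)
          ≤ (h₂ ^ 2 * P₂ / (1 + h₂ ^ 2 * P₁)) * (1 + h₂ ^ 2 * P₁) := by
            exact mul_le_mul_of_nonneg_right this hden.le
        _ = h₂ ^ 2 * P₂ := by field_simp
    constructor
    · rw [div_le_iff₀ h1sq]
      nlinarith
    · rw [div_add_div _ _ h1sq.ne' h2sq.ne', div_le_iff₀ (by positivity)]
      nlinarith [mul_le_mul_of_nonneg_left h1
          (by positivity : (0:ℝ) ≤ (2:ℝ) ^ r₂ * h₂ ^ 2),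
        mul_le_mul_of_nonneg_left h2' h1sq.le,
        mul_le_mul_of_nonneg_left hsum (by positivity : (0:ℝ) ≤ h₁ ^ 2 * h₂ ^ 2)]
  · rintro ⟨g1, g2⟩
    set A : ℝ := ((2:ℝ) ^ r₁ - 1) / h₁ ^ 2 with hA
    set B : ℝ := ((2:ℝ) ^ r₂ - 1) * (1 + h₂ ^ 2 * A) / h₂ ^ 2 with hB
    have hA0 : 0 ≤ A := div_nonneg (by linarith) h1sq.le
    have hden : (0:ℝ) < 1 + h₂ ^ 2 * A := by nlinarith
    have hB0 : 0 ≤ B := div_nonneg (mul_nonneg (by linarith) hden.le) h2sq.le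
    refine ⟨A, B, hA0, hB0, ?_, ?_, ?_⟩
    · have : A + B = ((2:ℝ) ^ r₁ - 1) * (2:ℝ) ^ r₂ / h₁ ^ 2 + ((2:ℝ) ^ r₂ - 1) / h₂ ^ 2 := by
        rw [hA, hB, hA]
        field_simp
        ring
      linarith [this ▸ g2]
    · have hfrac : h₂ ^ 2 * B / (1 + h₂ ^ 2 * A) = (2:ℝ) ^ r₂ - 1 := by
        rw [hB]; field_simp
      rw [ge_iff_le, Real.le_logb_iff_rpow_le one_lt_two (by rw [hfrac]; linarith), hfrac]
      linarith
    · have hval : 1 + h₁ ^ 2 * A = (2:ℝ) ^ r₁ := by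
        rw [hA]; field_simp; ring
      rw [ge_iff_le, Real.le_logb_iff_rpow_le one_lt_two (by rw [hval]; linarith), hval]
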